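/- Let (R, m) be a Noetherian local ring, let I be an ideal of R of finite colength, let f ∈ R with r = r_f(I) < ∞, and let φ_{f,I} : R/I → R/I be the R-linear map given by multiplication by f. Then equality ℓ(R/I) = r · ℓ(R/(⟨f⟩ + I)) holds if and only if ker(φ_{f,I}) = (⟨f^{r-1}⟩ + I)/I, the image in R/I of the ideal generated by f^{r-1}. -/

import Mathlib

/-!
Multiplication `φ` by `f` on `M = R/I` satisfies `φ ^ r = 0`. Since `φ` maps `range φ^k` onto
`range φ^(k+1)` with kernel `ker φ ⊓ range φ^k`, additivity of length gives
`ℓ(M) = ∑_{k<r} ℓ(ker φ ⊓ range φ^k)`. Each summand is at most `ℓ(ker φ) = ℓ(M/fM) = ℓ(R/(⟨f⟩ + I))`,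
with equality iff `ker φ ≤ range φ^k`; as the ranges decrease, `ℓ(M) = r · ℓ(M/fM)` is therefore
equivalent to `ker φ ≤ range φ^(r-1)`, and the reverse inclusion always holds because `φ ^ r = 0`.
-/

/-- The length of an `R`-module `M`: the supremum of lengths of strictly increasing
chains of submodules of `M` (i.e. the Krull dimension of the submodule lattice),
viewed in `ℕ∞`. -/
noncomputable def moduleLength (R M : Type*) [Ring R] [AddCommGroup M] [Module R M] : ℕ∞ :=
  (Order.krullDim (Submodule R M)).unbotD 0

open LinearMap

theorem moduleLength_eq_length (R M : Type*) [Ring R] [AddCommGroup M] [Module R M] :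
    moduleLength R M = Module.length R M := by
  rw [moduleLength, ← Module.coe_length, WithBot.unbotD_coe]

theorem ENat.sum_eq_card_mul_iff {ι : Type*} {s : Finset ι} {a : ι → ℕ∞} {c : ℕ∞} (hc : c ≠ ⊤)
    (ha : ∀ i ∈ s, a i ≤ c) : ∑ i ∈ s, a i = s.card * c ↔ ∀ i ∈ s, a i = c := by
  lift c to ℕ using hc
  have ha' : ∀ i ∈ s, a i = ((a i).toNat : ℕ∞) := fun i hi =>
    (ENat.natCast_toNat (ne_top_of_le_ne_top (ENat.natCast_ne_top c) (ha i hi))).symm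
  rw [Finset.sum_congr rfl ha', ← nsmul_eq_mul, ← Finset.sum_const]
  norm_cast
  rw [Finset.sum_eq_sum_iff_of_le fun i hi => ?_]
  · refine forall₂_congr fun i hi => ?_
    rw [ha' i hi]
    norm_cast
  · exact_mod_cast (ha' i hi) ▸ ha i hi

namespace Module

variable {R M : Type*} [Ring R] [AddCommGroup M] [Module R M]

theorem length_lt_length_of_lt {A B : Submodule R M} (h : A < B) (hB : length R B ≠ ⊤) :
    length R A < length R B := by
  rw [length_submodule] at hB
  rw [length_submodule, length_submodule]
  exact Order.height_strictMono h ((Order.height_mono h.le).trans_lt (lt_top_iff_ne_top.2 hB))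

theorem length_ker_eq_length_quotient_range (φ : M →ₗ[R] M) (hM : length R M ≠ ⊤) :
    length R (ker φ) = length R (M ⧸ range φ) := by
  have hker := length_eq_add_of_exact _ _ (ker φ.rangeRestrict).injective_subtype
    φ.surjective_rangeRestrict (exact_subtype_ker_map φ.rangeRestrict)
  have hcoker := length_eq_add_of_exact _ _ (range φ).injective_subtype
    (range φ).mkQ_surjective (exact_subtype_mkQ (range φ))
  rw [ker_rangeRestrict] at hker
  refine ENat.add_left_injective_of_ne_top (ne_top_of_le_ne_top hM
    (length_le_of_injective _ (range φ).injective_subtype)) ?_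
  exact hker.symm.trans (hcoker.trans (add_comm _ _))

namespace End

theorem range_pow_antitone (φ : Module.End R M) : Antitone fun k : ℕ => range (φ ^ k) :=
  antitone_nat_of_succ_le fun k => by
    rw [pow_succ, mul_eq_comp]
    exact range_comp_le_range _ _

theorem range_pow_pred_le_ker {φ : Module.End R M} {r : ℕ} (hr : 0 < r) (hφ : φ ^ r = 0) :
    range (φ ^ (r - 1)) ≤ ker φ := by
  rintro _ ⟨x, rfl⟩
  rw [mem_ker, ← mul_apply, ← pow_succ', Nat.sub_add_cancel hr, hφ, LinearMap.zero_apply]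

theorem length_range_pow_eq (φ : Module.End R M) (k : ℕ) :
    length R (range (φ ^ k)) =
      length R ↥(ker φ ⊓ range (φ ^ k)) + length R (range (φ ^ (k + 1))) := by
  have hmaps : ∀ x ∈ range (φ ^ k), φ x ∈ range (φ ^ (k + 1)) := by
    rintro _ ⟨y, rfl⟩
    exact ⟨y, by rw [pow_succ', mul_apply]⟩
  refine length_eq_add_of_exact (Submodule.inclusion inf_le_right) (φ.restrict hmaps)
    (Submodule.inclusion_injective _) ?_ ?_
  · rintro ⟨_, y, rfl⟩
    exact ⟨⟨(φ ^ k) y, y, rfl⟩, Subtype.ext (by simp [restrict_apply, pow_succ', mul_apply])⟩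
  · rintro ⟨x, hx⟩
    simpa [restrict_apply, Subtype.ext_iff] using fun _ => hx

theorem length_eq_sum_add_length_range_pow (φ : Module.End R M) (n : ℕ) :
    length R M =
      ∑ k ∈ Finset.range n, length R ↥(ker φ ⊓ range (φ ^ k)) + length R (range (φ ^ n)) := by
  induction n with
  | zero => rw [Finset.sum_range_zero, zero_add, pow_zero, one_eq_id, range_id, length_top]
  | succ n ih => rw [ih, length_range_pow_eq, Finset.sum_range_succ, add_assoc]

theorem length_eq_mul_length_quotient_range_iff {φ : Module.End R M} {r : ℕ} (hr : 0 < r)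
    (hφ : φ ^ r = 0) (hM : length R M ≠ ⊤) :
    length R M = r * length R (M ⧸ range φ) ↔ ker φ = range (φ ^ (r - 1)) := by
  have hsum : length R M = ∑ k ∈ Finset.range r, length R ↥(ker φ ⊓ range (φ ^ k)) := by
    rw [length_eq_sum_add_length_range_pow φ r, hφ, range_zero, length_bot, add_zero]
  have hker : length R (ker φ) ≠ ⊤ :=
    ne_top_of_le_ne_top hM (length_le_of_injective _ (ker φ).injective_subtype)
  have hle (k : ℕ) : length R ↥(ker φ ⊓ range (φ ^ k)) ≤ length R (ker φ) :=
    length_le_of_injective _ (Submodule.inclusion_injective inf_le_left)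
  have hlength_eq_iff (k : ℕ) :
      length R ↥(ker φ ⊓ range (φ ^ k)) = length R (ker φ) ↔ ker φ ≤ range (φ ^ k) := by
    refine ⟨fun h => inf_eq_left.1 ?_, fun h => by rw [inf_eq_left.2 h]⟩
    by_contra hne
    exact (length_lt_length_of_lt (inf_le_left.lt_of_ne hne) hker).ne h
  have hsum_eq_iff := ENat.sum_eq_card_mul_iff (s := Finset.range r) hker fun k _ => hle k
  rw [Finset.card_range] at hsum_eq_iff
  rw [← length_ker_eq_length_quotient_range φ hM, hsum, hsum_eq_iff]
  simp only [Finset.mem_range, hlength_eq_iff]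
  rw [le_antisymm_iff, and_iff_left (range_pow_pred_le_ker hr hφ)]
  exact ⟨fun h => h (r - 1) (by omega), fun h k hk => h.trans (range_pow_antitone φ (by omega))⟩

end End

end Module

theorem Ideal.range_algebraMap_end_quotient {R : Type*} [CommRing R] (I : Ideal R) (a : R) :
    range (algebraMap R (Module.End R (R ⧸ I)) a) = Submodule.map I.mkQ (Ideal.span {a}) := by
  ext x
  simp only [mem_range, Submodule.mem_map, Ideal.mem_span_singleton']
  constructor
  · rintro ⟨y, rfl⟩
    obtain ⟨g, rfl⟩ := I.mkQ_surjective y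
    exact ⟨g * a, ⟨g, rfl⟩, by simp [Algebra.smul_def, mul_comm]⟩
  · rintro ⟨_, ⟨b, rfl⟩, rfl⟩
    exact ⟨I.mkQ b, by simp [Algebra.smul_def, mul_comm]⟩

theorem length_eq_rootIndex_mul_iff_ker_general
    (R : Type*) [CommRing R]
    (I : Ideal R) (hI : moduleLength R (R ⧸ I) ≠ ⊤)
    (f : R) (hf : ∃ r : ℕ, 0 < r ∧ f ^ r ∈ I)
    (r : ℕ) (hr : r = sInf {r : ℕ | 0 < r ∧ f ^ r ∈ I})
    (φ : (R ⧸ I) →ₗ[R] (R ⧸ I))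
    (hφ : ∀ g : R, φ (Ideal.Quotient.mk I g) = Ideal.Quotient.mk I (f * g)) :
    moduleLength R (R ⧸ I) = (r : ℕ∞) * moduleLength R (R ⧸ (Ideal.span {f} + I)) ↔
      LinearMap.ker φ = Submodule.map I.mkQ (Ideal.span {f ^ (r - 1)}) := by
  obtain ⟨hr_pos, hfr⟩ : 0 < r ∧ f ^ r ∈ I := hr ▸ Nat.sInf_mem hf
  have hφ_eq : φ = algebraMap R (Module.End R (R ⧸ I)) f := by
    ext
    simpa [Algebra.smul_def] using hφ 1
  have hrange (k : ℕ) : range (φ ^ k) = Submodule.map I.mkQ (Ideal.span {f ^ k}) := by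
    rw [hφ_eq, ← map_pow, I.range_algebraMap_end_quotient]
  have hnil : φ ^ r = 0 := by
    rw [← range_eq_bot, hrange, eq_bot_iff, Submodule.map_le_iff_le_comap, Submodule.comap_bot,
      Submodule.ker_mkQ, Ideal.span_singleton_le_iff_mem]
    exact hfr
  have hcoker : (R ⧸ (Ideal.span {f} + I)) ≃ₗ[R] (R ⧸ I) ⧸ LinearMap.range φ := by
    rw [← pow_one φ, hrange 1, pow_one, Submodule.add_eq_sup, sup_comm]
    exact (Submodule.quotientQuotientEquivQuotientSup I _).symm
  rw [moduleLength_eq_length, moduleLength_eq_length, hcoker.length_eq, ← hrange]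
  rw [moduleLength_eq_length] at hI
  exact Module.End.length_eq_mul_length_quotient_range_iff hr_pos hnil hI

/-- **Theorem (characterization of equality).**
Let `(R, m)` be a Noetherian local ring, `I` an ideal of finite colength, `f ∈ R` with
`r = r_f(I) < ∞`, and let `φ_{f,I} : R/I → R/I` be multiplication by `f`.  Then
`ℓ(R/I) = r · ℓ(R/(⟨f⟩ + I))` holds if and only if
`ker(φ_{f,I}) = (⟨f^{r-1}⟩ + I)/I`, the image in `R/I` of the ideal generated by `f^{r-1}`. -/
theorem length_eq_rootIndex_mul_iff_ker
    (R : Type*) [CommRing R] [IsNoetherianRing R] [IsLocalRing R]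
    (I : Ideal R) (hI : moduleLength R (R ⧸ I) ≠ ⊤)
    (f : R) (hf : ∃ r : ℕ, 0 < r ∧ f ^ r ∈ I)
    (r : ℕ) (hr : r = sInf {r : ℕ | 0 < r ∧ f ^ r ∈ I})
    (φ : (R ⧸ I) →ₗ[R] (R ⧸ I))
    (hφ : ∀ g : R, φ (Ideal.Quotient.mk I g) = Ideal.Quotient.mk I (f * g)) :
    moduleLength R (R ⧸ I) = (r : ℕ∞) * moduleLength R (R ⧸ (Ideal.span {f} + I)) ↔
      LinearMap.ker φ = Submodule.map I.mkQ (Ideal.span {f ^ (r - 1)}) :=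
  length_eq_rootIndex_mul_iff_ker_general R I hI f hf r hr φ hφ
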